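/- (Proposition 2, specialized to the class of finite p-groups) Let p be a prime and let G be a conjugacy F_p-separable group. Then for every finite normal subgroup N of G, the quotient group G/N is conjugacy F_p-separable. -/

import Mathlib

/-- `G` is conjugacy `F_p`-separable: whenever `a, b ∈ G` are not conjugate in `G`,
there exists a surjective homomorphism `φ` of `G` onto some finite `p`-group `X`
such that `φ a` and `φ b` are not conjugate in `X`. -/
def IsConjFpSeparable (p : ℕ) (G : Type) [Group G] : Prop :=
  ∀ a b : G, ¬ IsConj a b →
    ∃ (X : Type) (_ : Group X) (_ : Fintype X),
      IsPGroup p X ∧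
      ∃ φ : G →* X, Function.Surjective φ ∧ ¬ IsConj (φ a) (φ b)

/-!
If `aN` and `bN` are not conjugate in `G ⧸ N`, then `a` is conjugate to none of the finitely
many elements `b * n` (`n ∈ N`). Separating `a` from each `b * n` by a finite `p`-quotient and
taking the image `Y` of `G` in the product of these quotients gives one finite `p`-quotient
`π : G → Y` separating `a` from all `b * n` at once; then `Y ⧸ π(N)` is a finite `p`-quotient of
`G ⧸ N` in which the images of `aN` and `bN` are still not conjugate.
-/

theorem IsPGroup.pi {p : ℕ} {ι : Type} [Finite ι] {X : ι → Type} [∀ i, Group (X i)]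
    (hX : ∀ i, IsPGroup p (X i)) : IsPGroup p (∀ i, X i) := by
  cases nonempty_fintype ι
  intro g
  choose k hk using fun i => hX i (g i)
  refine ⟨Finset.univ.sup k, funext fun i => ?_⟩
  obtain ⟨d, hd⟩ := Nat.exists_eq_add_of_le (Finset.le_sup (f := k) (Finset.mem_univ i))
  simp [hd, pow_add, pow_mul, hk i]

theorem QuotientGroup.isConj_mk_iff {G : Type*} [Group G] {N : Subgroup G} [N.Normal]
    {a b : G} : IsConj (a : G ⧸ N) (b : G ⧸ N) ↔ ∃ n ∈ N, IsConj a (b * n) := by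
  constructor
  · rw [isConj_iff]
    rintro ⟨c, hc⟩
    obtain ⟨g, rfl⟩ := QuotientGroup.mk_surjective c
    have hmem : b⁻¹ * (g * a * g⁻¹) ∈ N := QuotientGroup.eq.1 (by simpa using hc.symm)
    exact ⟨_, hmem, isConj_iff.2 ⟨g, by group⟩⟩
  · rintro ⟨n, hn, hc⟩
    simpa [QuotientGroup.mk'_apply, (QuotientGroup.eq_one_iff n).2 hn] using
      (QuotientGroup.mk' N).map_isConj hc

theorem exists_surjective_isPGroup_factoring {p : ℕ} {G ι : Type} [Group G] [Finite ι]
    {X : ι → Type} [∀ i, Group (X i)] [∀ i, Finite (X i)] (hX : ∀ i, IsPGroup p (X i))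
    (φ : ∀ i, G →* X i) :
    ∃ (Y : Type) (_ : Group Y) (_ : Finite Y), IsPGroup p Y ∧
      ∃ π : G →* Y, Function.Surjective π ∧ ∀ i, ∃ f : Y →* X i, f.comp π = φ i := by
  let Φ : G →* ∀ i, X i := MonoidHom.pi φ
  refine ⟨Φ.range, inferInstance, inferInstance, (IsPGroup.pi hX).to_subgroup _,
    Φ.rangeRestrict, Φ.rangeRestrict_surjective,
    fun i => ⟨(Pi.evalMonoidHom X i).comp Φ.range.subtype, rfl⟩⟩

theorem quotient_conjFpSeparable_of_finite_normal_general
    (p : ℕ) (G : Type) [Group G] (h : IsConjFpSeparable p G)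
    (N : Subgroup G) [N.Normal] (hN : Finite N) :
    IsConjFpSeparable p (G ⧸ N) := by
  intro a b hab
  obtain ⟨a, rfl⟩ := QuotientGroup.mk_surjective a
  obtain ⟨b, rfl⟩ := QuotientGroup.mk_surjective b
  have hsep : ∀ n : N, ¬ IsConj a (b * n) :=
    fun n hc => hab (QuotientGroup.isConj_mk_iff.2 ⟨n, n.2, hc⟩)
  choose X _ _ hX φ _ hφ using fun n : N => h a (b * n) (hsep n)
  obtain ⟨Y, _, _, hY, π, hπ, hfactor⟩ := exists_surjective_isPGroup_factoring hX φ
  let M : Subgroup Y := N.map π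
  have : M.Normal := Subgroup.Normal.map inferInstance π hπ
  refine ⟨Y ⧸ M, inferInstance, Fintype.ofFinite _, hY.to_quotient M,
    QuotientGroup.map N M π (Subgroup.le_comap_map π N),
    QuotientGroup.map_surjective_of_surjective N M π
      (QuotientGroup.mk_surjective.comp hπ) _, fun hc => ?_⟩
  obtain ⟨_, ⟨n, hn, rfl⟩, hc⟩ := QuotientGroup.isConj_mk_iff.1 hc
  obtain ⟨f, hf⟩ := hfactor ⟨n, hn⟩
  apply hφ ⟨n, hn⟩
  rw [← hf]
  simpa using f.map_isConj hc

/-- (Proposition 2 for the class of finite `p`-groups) Let `p` be a prime and `G` a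
conjugacy `F_p`-separable group. Then for every finite normal subgroup `N` of `G`,
the quotient `G ⧸ N` is conjugacy `F_p`-separable. -/
theorem quotient_conjFpSeparable_of_finite_normal
    (p : ℕ) (hp : p.Prime) (G : Type) [Group G] (h : IsConjFpSeparable p G)
    (N : Subgroup G) [N.Normal] (hN : Finite N) :
    IsConjFpSeparable p (G ⧸ N) :=
  quotient_conjFpSeparable_of_finite_normal_general p G h N hN
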